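/- arXiv:2206.11346 — 5 statements merged into one kernel-verified Lean document; each statement's English description precedes it below -/
import Mathlib

section
/- For a convex closed set Θ in ℝ^d, a point θ̄ ∈ Θ, a vector g ∈ ℝ^d, and β > 0, define the gradient mapping G = β(θ̄ - Π_Θ(θ̄ - g/β)) where Π_Θ is the orthogonal projection onto Θ, and the Frank–Wolfe gap gap = sup_{y ∈ Θ} ⟨g, θ̄ - y⟩. Then ‖G‖² ≤ β · gap. -/
open scoped RealInnerProductSpace

/-- Proposition 1.1 (first inequality): the squared norm of the gradient mapping
`G = β (θ̄ - Π_Θ(θ̄ - g/β))` is bounded by `β` times the Frank–Wolfe gap. -/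
theorem gradient_mapping_sq_le_beta_mul_fw_gap {d : ℕ}
    (Θ : Set (EuclideanSpace ℝ (Fin d)))
    (hne : Θ.Nonempty) (hcl : IsClosed Θ) (hconv : Convex ℝ Θ)
    (θb g p : EuclideanSpace ℝ (Fin d)) (β gap : ℝ)
    (hθ : θb ∈ Θ) (hβ : 0 < β)
    (hpmem : p ∈ Θ)
    (hproj : ∀ y ∈ Θ, ⟪(θb - β⁻¹ • g) - p, y - p⟫ ≤ 0)
    (hgap : ∀ y ∈ Θ, ⟪g, θb - y⟫ ≤ gap) :
    ‖β • (θb - p)‖ ^ 2 ≤ β * gap := by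
  have h1 := hproj θb hθ
  have h2 := hgap p hpmem
  have hrw : ((θb - β⁻¹ • g) - p : EuclideanSpace ℝ (Fin d)) = (θb - p) - β⁻¹ • g := by
    abel
  rw [hrw, inner_sub_left, real_inner_smul_left, real_inner_self_eq_norm_sq] at h1
  have h3 : ‖θb - p‖ ^ 2 ≤ β⁻¹ * ⟪g, θb - p⟫ := by linarith
  have h4 : ⟪g, θb - p⟫ ≤ gap := h2
  have hβ2 : (0:ℝ) < β⁻¹ := by positivity
  have h5 : ‖θb - p‖ ^ 2 ≤ β⁻¹ * gap := h3.trans (by nlinarith)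
  rw [norm_smul]
  simp only [Real.norm_eq_abs, abs_of_pos hβ]
  have h6 : β * ‖θb - p‖ ^ 2 ≤ gap := by
    have := mul_le_mul_of_nonneg_left h5 hβ.le
    rwa [mul_inv_cancel_left₀ hβ.ne'] at this
  nlinarith [sq_nonneg (‖θb - p‖)]
end

section
/- Let Θ ⊆ ℝ^d be convex and compact with diameter D_Θ, i.e., ‖x - y‖ ≤ D_Θ for all x, y ∈ Θ. Suppose f : ℝ^d → ℝ is continuously differentiable with ‖∇f(θ)‖ ≤ L for all θ ∈ Θ. Fix θ̄ ∈ Θ and β > 0, and let G = β(θ̄ - Π_Θ(θ̄ - ∇f(θ̄)/β)) be the gradient mapping. Then the Frank–Wolfe gap satisfies g_Θ(θ̄) := max_{y ∈ Θ} ⟨∇f(θ̄), θ̄ - y⟩ ≤ (L/β + D_Θ)‖G‖. -/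
open scoped RealInnerProductSpace

/-- Proposition 1.1 (second inequality, explicit-constant version): if `Θ` is compact
convex with diameter `D_Θ` and `‖∇f‖ ≤ L` on `Θ`, then the Frank–Wolfe gap at `θ̄`
is at most `(L/β + D_Θ)‖G‖` where `G` is the gradient mapping at `θ̄`. -/
theorem fw_gap_le_const_mul_gradient_mapping {d : ℕ}
    (Θ : Set (EuclideanSpace ℝ (Fin d)))
    (hne : Θ.Nonempty) (hcomp : IsCompact Θ) (hconv : Convex ℝ Θ)
    (D L β : ℝ) (hβ : 0 < β)
    (hD : ∀ x ∈ Θ, ∀ y ∈ Θ, ‖x - y‖ ≤ D)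
    (f : EuclideanSpace ℝ (Fin d) → ℝ) (hf : Differentiable ℝ f)
    (hL : ∀ θ ∈ Θ, ‖gradient f θ‖ ≤ L)
    (θb p : EuclideanSpace ℝ (Fin d)) (hθ : θb ∈ Θ) (hpmem : p ∈ Θ)
    (hproj : ∀ y ∈ Θ, ⟪(θb - β⁻¹ • gradient f θb) - p, y - p⟫ ≤ 0) :
    ∀ y ∈ Θ, ⟪gradient f θb, θb - y⟫ ≤ (L / β + D) * ‖β • (θb - p)‖ := by

  intro y hy
  set g := gradient f θb with hg
  have hgL : ‖g‖ ≤ L := hL θb hθ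
  have hpr := hproj y hy
  have hnorm : ‖β • (θb - p)‖ = β * ‖θb - p‖ := by
    rw [norm_smul, Real.norm_of_nonneg hβ.le]
  have e1 : ⟪g, θb - y⟫ = ⟪g, θb - p⟫ + ⟪g, p - y⟫ := by
    rw [← inner_add_right, sub_add_sub_cancel]
  have e2 : ⟪(θb - β⁻¹ • g) - p, y - p⟫
      = ⟪θb - p, y - p⟫ - β⁻¹ * ⟪g, y - p⟫ := by
    rw [sub_right_comm, inner_sub_left, real_inner_smul_left]
  have e3 : ⟪g, p - y⟫ = -⟪g, y - p⟫ := by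
    rw [← neg_sub, inner_neg_right]
  have e4 : ⟪θb - p, p - y⟫ = -⟪θb - p, y - p⟫ := by
    rw [← inner_neg_right, neg_sub]
  have hA : ⟪g, θb - p⟫ ≤ L * ‖θb - p‖ :=
    le_trans (real_inner_le_norm g (θb - p))
      (mul_le_mul_of_nonneg_right hgL (norm_nonneg _))
  have hB : ⟪θb - p, p - y⟫ ≤ ‖θb - p‖ * D :=
    le_trans (real_inner_le_norm _ _)
      (mul_le_mul_of_nonneg_left (hD p hpmem y hy) (norm_nonneg _))
  rw [e2] at hpr
  rw [e1, e3, hnorm]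
  rw [e4] at hB
  have hβ' : β⁻¹ > 0 := inv_pos.mpr hβ
  have hfield : (L / β + D) * (β * ‖θb - p‖) = L * ‖θb - p‖ + β * (D * ‖θb - p‖) := by
    field_simp
  rw [hfield]
  have h6 := mul_le_mul_of_nonneg_left hpr hβ.le
  rw [mul_zero, mul_sub, ← mul_assoc, mul_inv_cancel₀ hβ.ne', one_mul] at h6
  have h7 := mul_le_mul_of_nonneg_left hB hβ.le
  linarith
end

section
/- Let η_j = (N + j)^{-a} for an integer N ≥ 1 and 1/2 < a < 1, and define Y_k^i = ∏_{j=k+1}^{i} (1 - η_j/4) for i > k and Y_i^i = 1. Then for all 1 ≤ k ≤ i ≤ N: Y_{k-1}^i ≤ exp(-(1/8)((N+i)^{1-a} - (N+k)^{1-a})). -/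
open Finset

private lemma rpow_step {b : ℝ} (hb0 : 0 < b) (hb1 : b < 1) {x : ℝ} (hx : 0 < x) :
    (x + 1) ^ b - x ^ b ≤ b * x ^ (b - 1) := by
  obtain ⟨c, hc, hderiv⟩ := exists_hasDerivAt_eq_slope (fun t => t ^ b)
    (fun t => b * t ^ (b - 1)) (by linarith : x < x + 1)
    (by
      apply ContinuousOn.rpow_const continuousOn_id
      intro t ht
      exact Or.inl (ne_of_gt (lt_of_lt_of_le hx ht.1)))
    (fun t ht => Real.hasDerivAt_rpow_const (Or.inl (ne_of_gt (hx.trans ht.1))))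
  have hcx : x ≤ c := le_of_lt hc.1
  have hle : c ^ (b - 1) ≤ x ^ (b - 1) :=
    Real.rpow_le_rpow_of_nonpos hx hcx (by linarith)
  have : b * c ^ (b - 1) = (x + 1) ^ b - x ^ b := by
    rw [hderiv]; ring_nf
  nlinarith [hle, hb0.le]

private lemma telescope (g : ℕ → ℝ) (k i : ℕ) (h : k ≤ i) :
    ∑ j ∈ Finset.Icc k i, (g (j + 1) - g j) = g (i + 1) - g k := by
  induction i with
  | zero => simp [Nat.le_zero.mp h]
  | succ n ih =>
    rcases Nat.lt_or_ge k (n + 1) with h' | h'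
    · rw [Finset.sum_Icc_succ_top (by omega), ih (by omega)]; ring
    · have : k = n + 1 := le_antisymm h h'
      subst this; simp

/-- Lemma A.7 (first claim): with `η_j = (N+j)^{-a}`, `1/2 < a < 1`, the product
`Y_{k-1}^i = ∏_{j=k}^i (1 - η_j/4)` is bounded by
`exp(-(1/8)((N+i)^{1-a} - (N+k)^{1-a}))` for `1 ≤ k ≤ i ≤ N`. -/
theorem product_bound_exp {N : ℕ} (hN : 1 ≤ N) (a : ℝ)
    (ha1 : 1 / 2 < a) (ha2 : a < 1)
    (k i : ℕ) (hk : 1 ≤ k) (hki : k ≤ i) (hiN : i ≤ N) :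
    ∏ j ∈ Finset.Icc k i, (1 - ((N : ℝ) + j) ^ (-a) / 4) ≤
      Real.exp (-(1 / 8) * (((N : ℝ) + i) ^ (1 - a) - ((N : ℝ) + k) ^ (1 - a))) := by
  set b : ℝ := 1 - a with hbdef
  have hb0 : 0 < b := by rw [hbdef]; linarith
  have hb1 : b < 1 := by rw [hbdef]; linarith
  have hb2 : b < 1 / 2 := by rw [hbdef]; linarith
  -- Step 1: bound the product by an exponential of a sum
  have hstep1 : ∏ j ∈ Finset.Icc k i, (1 - ((N : ℝ) + j) ^ (-a) / 4) ≤
      Real.exp (∑ j ∈ Finset.Icc k i, -(((N : ℝ) + j) ^ (-a) / 4)) := by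
    rw [Real.exp_sum]
    apply Finset.prod_le_prod
    · intro j hj
      have h1 : ((N : ℝ) + j) ^ (-a) ≤ 1 := by
        apply Real.rpow_le_one_of_one_le_of_nonpos
        · have : (1 : ℝ) ≤ (N : ℝ) := by exact_mod_cast hN
          have : (0 : ℝ) ≤ (j : ℝ) := Nat.cast_nonneg j
          linarith
        · linarith
      linarith
    · intro j hj
      have := Real.add_one_le_exp (-(((N : ℝ) + j) ^ (-a) / 4))
      linarith
  refine hstep1.trans (Real.exp_le_exp.mpr ?_)
  set S : ℝ := ∑ j ∈ Finset.Icc k i, ((N : ℝ) + j) ^ (-a) with hSdef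
  have hSnonneg : 0 ≤ S := Finset.sum_nonneg fun j hj => Real.rpow_nonneg (by positivity) _
  set Δ : ℝ := ((N : ℝ) + i) ^ b - ((N : ℝ) + k) ^ b with hΔdef
  have hΔ0 : 0 ≤ Δ := by
    rw [hΔdef]
    have : ((N : ℝ) + k) ^ b ≤ ((N : ℝ) + i) ^ b := by
      apply Real.rpow_le_rpow (by positivity) _ hb0.le
      have : (k : ℝ) ≤ (i : ℝ) := Nat.cast_le.mpr hki
      linarith
    linarith
  -- Step 2: lower bound the sum via telescoping
  have hsum : Δ ≤ b * S := by
    rw [hSdef, Finset.mul_sum]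
    have htel := telescope (fun j => ((N : ℝ) + j) ^ b) k i hki
    have hterm : ∀ j ∈ Finset.Icc k i,
        ((N : ℝ) + (j + 1 : ℕ)) ^ b - ((N : ℝ) + j) ^ b ≤ b * ((N : ℝ) + j) ^ (-a) := by
      intro j hj
      have hx : (0 : ℝ) < (N : ℝ) + j := by positivity
      have hst := rpow_step hb0 hb1 hx
      have hea : -a = b - 1 := by rw [hbdef]; ring
      have hcast : ((N : ℝ) + (j + 1 : ℕ)) = ((N : ℝ) + j) + 1 := by push_cast; ring
      rw [hcast, hea]
      exact hst
    have hsum' : ∑ j ∈ Finset.Icc k i, (((N : ℝ) + (j + 1 : ℕ)) ^ b - ((N : ℝ) + j) ^ b) ≤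
        ∑ j ∈ Finset.Icc k i, b * ((N : ℝ) + j) ^ (-a) := Finset.sum_le_sum hterm
    rw [htel] at hsum'
    have hmono : ((N : ℝ) + i) ^ b ≤ ((N : ℝ) + (i + 1 : ℕ)) ^ b := by
      apply Real.rpow_le_rpow (by positivity) _ hb0.le
      push_cast; linarith
    rw [hΔdef]
    calc ((N : ℝ) + i) ^ b - ((N : ℝ) + k) ^ b
        ≤ ((N : ℝ) + (i + 1 : ℕ)) ^ b - ((N : ℝ) + k) ^ b := by linarith
      _ ≤ ∑ j ∈ Finset.Icc k i, b * ((N : ℝ) + j) ^ (-a) := hsum'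
  -- Conclude
  have hfin : ∑ j ∈ Finset.Icc k i, -(((N : ℝ) + j) ^ (-a) / 4) = -(S / 4) := by
    rw [hSdef, Finset.sum_div, ← Finset.sum_neg_distrib]
  rw [hfin]
  nlinarith [hsum, hΔ0, hSnonneg, hb2]
end

section
/- Let η_j = (N + j)^{-a} for an integer N ≥ 1 and 1/2 < a < 1, and Y_{k-1}^i = ∏_{j=k}^{i} (1 - η_j/4). Then there exists a constant C (independent of N and k, e.g., C = e/(1-a) plus lower-order terms) such that ∑_{i=k}^{N} Y_{k-1}^i η_i ≤ C for all 1 ≤ k ≤ N. -/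
open Finset

/-- Lemma A.7 (second claim): with `η_j = (N+j)^{-a}`, `1/2 < a < 1`, and
`Y_{k-1}^i = ∏_{j=k}^i (1 - η_j/4)`, the sum `∑_{i=k}^N Y_{k-1}^i η_i` is bounded by a
constant independent of `N` and `k`. -/
theorem sum_product_eta_bounded (a : ℝ) (ha1 : 1 / 2 < a) (ha2 : a < 1) :
    ∃ C : ℝ, ∀ N k : ℕ, 1 ≤ k → k ≤ N →
      ∑ i ∈ Finset.Icc k N,
          (∏ j ∈ Finset.Icc k i, (1 - ((N : ℝ) + j) ^ (-a) / 4)) * ((N : ℝ) + i) ^ (-a)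
        ≤ C := by
  refine ⟨4, fun N k hk hkN => ?_⟩
  have hN1 : (1 : ℝ) ≤ (N : ℝ) := by
    have : 1 ≤ N := le_trans hk hkN
    exact_mod_cast this
  set η : ℕ → ℝ := fun j => ((N : ℝ) + j) ^ (-a) with hη
  have hηpos : ∀ j : ℕ, 0 < η j := fun j =>
    Real.rpow_pos_of_pos (by positivity) _
  have hη1 : ∀ j : ℕ, η j ≤ 1 := fun j =>
    Real.rpow_le_one_of_one_le_of_nonpos
      (by have : (0:ℝ) ≤ (j:ℝ) := Nat.cast_nonneg j; linarith)
      (by linarith)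
  have hfac : ∀ j : ℕ, 0 < 1 - η j / 4 := fun j => by
    have := hη1 j; linarith
  have hfac1 : ∀ j : ℕ, 1 - η j / 4 ≤ 1 := fun j => by
    have := hηpos j; linarith
  have key : ∀ M : ℕ,
      ∑ i ∈ Finset.Icc k M, (∏ j ∈ Finset.Icc k i, (1 - η j / 4)) * η i
        ≤ 4 - 4 * ∏ j ∈ Finset.Icc k M, (1 - η j / 4) := by
    intro M
    induction M with
    | zero =>
        rw [show Finset.Icc k 0 = ∅ by simp [Finset.Icc_eq_empty_iff]; omega]
        simp
    | succ M ih =>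
        by_cases hkM : k ≤ M + 1
        · rw [Finset.sum_Icc_succ_top hkM, Finset.prod_Icc_succ_top hkM]
          have hPpos : 0 < ∏ j ∈ Finset.Icc k M, (1 - η j / 4) :=
            Finset.prod_pos fun j _ => hfac j
          set P := ∏ j ∈ Finset.Icc k M, (1 - η j / 4) with hP
          have hstep : (P * (1 - η (M + 1) / 4)) * η (M + 1)
              ≤ 4 * P - 4 * (P * (1 - η (M + 1) / 4)) := by
            nlinarith [mul_pos hPpos (mul_pos (hηpos (M + 1)) (hηpos (M + 1))),
              hηpos (M + 1), hη1 (M + 1)]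
          linarith [ih, hstep]
        · rw [show Finset.Icc k (M+1) = ∅ by simp [Finset.Icc_eq_empty_iff]; omega]
          simp at *
  have hPnn : 0 ≤ ∏ j ∈ Finset.Icc k N, (1 - η j / 4) :=
    Finset.prod_nonneg fun j _ => le_of_lt (hfac j)
  have := key N
  simp only [hη] at this
  linarith
end

section
/- Let N ≥ 1 be an integer and 1/2 < a < 1. Then ∑_{k=0}^{N-1} (N+k+1)^{-a} ∑_{i=1}^{k-1} (N+i)^{-3a}(1 + (N+i)^{a·(1/a - 1)}) ∏_{j=i+1}^{k} (1 + (N+j)^{-a(1 + 1/a - 1)}) ≤ 8 N^{3-5a} (up to absolute constants). In particular, with γ = 1/a - 1, the weighted error sum ∑_{k=0}^{N-1} η_{k+1} E‖θ_k - θ̃_k‖² is O(N^{3-5a}), and dividing by ∑_{k=1}^N η_k ≥ N(2N)^{-a} gives the bound 16 N^{2-4a}. -/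
open Finset

/-- Display after (48) in the proof of Theorem 2.1: for `1/2 < a < 1` and `γ = 1/a - 1`,
the weighted error sum is `O(N^{3-5a})`. -/
theorem weighted_error_sum_bound (a : ℝ) (ha1 : 1 / 2 < a) (ha2 : a < 1) :
    ∃ C : ℝ, 0 < C ∧ ∀ N : ℕ, 1 ≤ N →
      ∑ k ∈ Finset.range N, ((N : ℝ) + k + 1) ^ (-a) *
          ∑ i ∈ Finset.Icc 1 (k - 1),
            ((N : ℝ) + i) ^ (-(3 * a)) * (1 + ((N : ℝ) + i) ^ (a * (1 / a - 1)))
              * ∏ j ∈ Finset.Icc (i + 1) k,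
                  (1 + ((N : ℝ) + j) ^ (-(a * (1 + (1 / a - 1)))))
        ≤ C * (N : ℝ) ^ (3 - 5 * a) := by
  have ha0 : 0 < a := by linarith
  have hane : a ≠ 0 := ne_of_gt ha0
  refine ⟨12, by norm_num, fun N hN => ?_⟩
  have hx1 : (1:ℝ) ≤ (N:ℝ) := by exact_mod_cast hN
  have hx0 : (0:ℝ) < (N:ℝ) := by linarith
  have hexp1 : a * (1 / a - 1) = 1 - a := by field_simp
  have hexp2 : -(a * (1 + (1 / a - 1))) = -1 := by field_simp; ring
  have key : ∀ k ∈ Finset.range N,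
      ((N : ℝ) + k + 1) ^ (-a) *
        ∑ i ∈ Finset.Icc 1 (k - 1),
          ((N : ℝ) + i) ^ (-(3 * a)) * (1 + ((N : ℝ) + i) ^ (a * (1 / a - 1)))
            * ∏ j ∈ Finset.Icc (i + 1) k,
                (1 + ((N : ℝ) + j) ^ (-(a * (1 + (1 / a - 1)))))
      ≤ 9 * (N:ℝ) ^ (2 - 5 * a) := by
    intro k hk
    have hkN : k < N := Finset.mem_range.mp hk
    have hterm : ∀ i ∈ Finset.Icc 1 (k - 1),
        ((N : ℝ) + i) ^ (-(3 * a)) * (1 + ((N : ℝ) + i) ^ (a * (1 / a - 1)))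
          * ∏ j ∈ Finset.Icc (i + 1) k,
              (1 + ((N : ℝ) + j) ^ (-(a * (1 + (1 / a - 1)))))
        ≤ 9 * (N:ℝ) ^ (1 - 4 * a) := by
      intro i hi
      have hik : i ≤ k - 1 := (Finset.mem_Icc.mp hi).2
      have hiN : (i:ℝ) ≤ (N:ℝ) := by
        have : i ≤ N := by omega
        exact_mod_cast this
      have h1 : ((N:ℝ) + i) ^ (-(3 * a)) ≤ (N:ℝ) ^ (-(3 * a)) :=
        Real.rpow_le_rpow_of_nonpos hx0 (le_add_of_nonneg_right (by positivity)) (by nlinarith)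
      have h2 : 1 + ((N:ℝ) + i) ^ (a * (1 / a - 1)) ≤ 3 * (N:ℝ) ^ (1 - a) := by
        rw [hexp1]
        have hle2 : ((N:ℝ) + i) ^ (1 - a) ≤ (2 * (N:ℝ)) ^ (1 - a) :=
          Real.rpow_le_rpow (by positivity) (by linarith) (by linarith)
        have hsplit : (2 * (N:ℝ)) ^ (1 - a) = 2 ^ (1 - a) * (N:ℝ) ^ (1 - a) :=
          Real.mul_rpow (by norm_num) (le_of_lt hx0)
        have h2le : (2:ℝ) ^ (1 - a) ≤ 2 := by
          calc (2:ℝ) ^ (1 - a) ≤ (2:ℝ) ^ (1:ℝ) :=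
                Real.rpow_le_rpow_of_exponent_le (by norm_num) (by linarith)
            _ = 2 := Real.rpow_one 2
        have hone : (1:ℝ) ≤ (N:ℝ) ^ (1 - a) :=
          Real.one_le_rpow hx1 (by linarith)
        have hNnn : (0:ℝ) ≤ (N:ℝ) ^ (1 - a) := by positivity
        nlinarith
      have h3 : (∏ j ∈ Finset.Icc (i + 1) k,
          (1 + ((N : ℝ) + j) ^ (-(a * (1 + (1 / a - 1)))))) ≤ 3 := by
        have hf : ∀ j ∈ Finset.Icc (i + 1) k,
            (1 + ((N : ℝ) + j) ^ (-(a * (1 + (1 / a - 1))))) ≤ 1 + (N:ℝ)⁻¹ := by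
          intro j hj
          rw [hexp2, Real.rpow_neg_one]
          have hj0 : (0:ℝ) ≤ (j:ℝ) := by positivity
          have hinv : ((N:ℝ) + j)⁻¹ ≤ (N:ℝ)⁻¹ := by
            apply inv_anti₀ hx0
            linarith
          linarith
        calc (∏ j ∈ Finset.Icc (i + 1) k,
              (1 + ((N : ℝ) + j) ^ (-(a * (1 + (1 / a - 1))))))
            ≤ ∏ _j ∈ Finset.Icc (i + 1) k, (1 + (N:ℝ)⁻¹) :=
              Finset.prod_le_prod (fun j _ => by positivity) hf
          _ = (1 + (N:ℝ)⁻¹) ^ (Finset.Icc (i + 1) k).card := by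
              rw [Finset.prod_const]
          _ ≤ (1 + (N:ℝ)⁻¹) ^ N := by
              apply pow_le_pow_right₀ (by have := inv_nonneg.mpr hx0.le; linarith)
              rw [Nat.card_Icc]; omega
          _ ≤ Real.exp ((N:ℝ)⁻¹) ^ N := by
              apply pow_le_pow_left₀ (by positivity)
              have := Real.add_one_le_exp ((N:ℝ)⁻¹)
              linarith
          _ = Real.exp ((N:ℕ) * (N:ℝ)⁻¹) := by
              rw [Real.exp_nat_mul]
          _ ≤ 3 := by
              rw [mul_inv_cancel₀ hx0.ne']
              have := Real.exp_one_lt_d9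
              linarith
      have hA : (0:ℝ) ≤ ((N:ℝ) + i) ^ (-(3 * a)) := by positivity
      have hB : (0:ℝ) ≤ 1 + ((N:ℝ) + i) ^ (a * (1 / a - 1)) := by positivity
      have hX : (0:ℝ) ≤ (N:ℝ) ^ (-(3 * a)) := by positivity
      have hY : (0:ℝ) ≤ 3 * (N:ℝ) ^ (1 - a) := by positivity
      have hprodnn : (0:ℝ) ≤ ∏ j ∈ Finset.Icc (i + 1) k,
          (1 + ((N : ℝ) + j) ^ (-(a * (1 + (1 / a - 1))))) :=
        Finset.prod_nonneg (fun j _ => by positivity)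
      calc ((N : ℝ) + i) ^ (-(3 * a)) * (1 + ((N : ℝ) + i) ^ (a * (1 / a - 1)))
            * ∏ j ∈ Finset.Icc (i + 1) k,
                (1 + ((N : ℝ) + j) ^ (-(a * (1 + (1 / a - 1)))))
          ≤ (N:ℝ) ^ (-(3 * a)) * (3 * (N:ℝ) ^ (1 - a)) * 3 :=
            mul_le_mul (mul_le_mul h1 h2 hB hX) h3 hprodnn (by positivity)
        _ = 9 * ((N:ℝ) ^ (-(3 * a)) * (N:ℝ) ^ (1 - a)) := by ring
        _ = 9 * (N:ℝ) ^ (1 - 4 * a) := by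
            rw [← Real.rpow_add hx0]
            ring_nf
    have hsum : (∑ i ∈ Finset.Icc 1 (k - 1),
        ((N : ℝ) + i) ^ (-(3 * a)) * (1 + ((N : ℝ) + i) ^ (a * (1 / a - 1)))
          * ∏ j ∈ Finset.Icc (i + 1) k,
              (1 + ((N : ℝ) + j) ^ (-(a * (1 + (1 / a - 1)))))) ≤ 9 * (N:ℝ) ^ (2 - 4 * a) := by
      calc (∑ i ∈ Finset.Icc 1 (k - 1),
          ((N : ℝ) + i) ^ (-(3 * a)) * (1 + ((N : ℝ) + i) ^ (a * (1 / a - 1)))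
            * ∏ j ∈ Finset.Icc (i + 1) k,
                (1 + ((N : ℝ) + j) ^ (-(a * (1 + (1 / a - 1))))))
          ≤ (Finset.Icc 1 (k - 1)).card • (9 * (N:ℝ) ^ (1 - 4 * a)) :=
            Finset.sum_le_card_nsmul _ _ _ hterm
        _ = ((Finset.Icc 1 (k - 1)).card : ℝ) * (9 * (N:ℝ) ^ (1 - 4 * a)) := by
            rw [nsmul_eq_mul]
        _ ≤ (N:ℝ) * (9 * (N:ℝ) ^ (1 - 4 * a)) := by
            apply mul_le_mul_of_nonneg_right _ (by positivity)
            have : (Finset.Icc 1 (k - 1)).card ≤ N := by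
              rw [Nat.card_Icc]; omega
            exact_mod_cast this
        _ = 9 * ((N:ℝ) ^ (1:ℝ) * (N:ℝ) ^ (1 - 4 * a)) := by
            rw [Real.rpow_one]; ring
        _ = 9 * (N:ℝ) ^ (2 - 4 * a) := by
            rw [← Real.rpow_add hx0]
            ring_nf
    have h4 : ((N : ℝ) + k + 1) ^ (-a) ≤ (N:ℝ) ^ (-a) :=
      Real.rpow_le_rpow_of_nonpos hx0 (by have := Nat.cast_nonneg (α := ℝ) k; linarith) (by linarith)
    have hsumnn : (0:ℝ) ≤ ∑ i ∈ Finset.Icc 1 (k - 1),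
        ((N : ℝ) + i) ^ (-(3 * a)) * (1 + ((N : ℝ) + i) ^ (a * (1 / a - 1)))
          * ∏ j ∈ Finset.Icc (i + 1) k,
              (1 + ((N : ℝ) + j) ^ (-(a * (1 + (1 / a - 1))))) := by
      apply Finset.sum_nonneg
      intro i _
      have : (0:ℝ) ≤ ∏ j ∈ Finset.Icc (i + 1) k,
          (1 + ((N : ℝ) + j) ^ (-(a * (1 + (1 / a - 1))))) :=
        Finset.prod_nonneg (fun j _ => by positivity)
      positivity
    calc ((N : ℝ) + k + 1) ^ (-a) *
          ∑ i ∈ Finset.Icc 1 (k - 1),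
            ((N : ℝ) + i) ^ (-(3 * a)) * (1 + ((N : ℝ) + i) ^ (a * (1 / a - 1)))
              * ∏ j ∈ Finset.Icc (i + 1) k,
                  (1 + ((N : ℝ) + j) ^ (-(a * (1 + (1 / a - 1)))))
        ≤ (N:ℝ) ^ (-a) * (9 * (N:ℝ) ^ (2 - 4 * a)) :=
          mul_le_mul h4 hsum hsumnn (by positivity)
      _ = 9 * ((N:ℝ) ^ (-a) * (N:ℝ) ^ (2 - 4 * a)) := by ring
      _ = 9 * (N:ℝ) ^ (2 - 5 * a) := by
          rw [← Real.rpow_add hx0]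
          ring_nf
  calc (∑ k ∈ Finset.range N, ((N : ℝ) + k + 1) ^ (-a) *
          ∑ i ∈ Finset.Icc 1 (k - 1),
            ((N : ℝ) + i) ^ (-(3 * a)) * (1 + ((N : ℝ) + i) ^ (a * (1 / a - 1)))
              * ∏ j ∈ Finset.Icc (i + 1) k,
                  (1 + ((N : ℝ) + j) ^ (-(a * (1 + (1 / a - 1))))))
      ≤ (Finset.range N).card • (9 * (N:ℝ) ^ (2 - 5 * a)) :=
        Finset.sum_le_card_nsmul _ _ _ key
    _ = (N:ℝ) * (9 * (N:ℝ) ^ (2 - 5 * a)) := by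
        rw [Finset.card_range, nsmul_eq_mul]
    _ = 9 * ((N:ℝ) ^ (1:ℝ) * (N:ℝ) ^ (2 - 5 * a)) := by
        rw [Real.rpow_one]; ring
    _ = 9 * (N:ℝ) ^ (3 - 5 * a) := by
        rw [← Real.rpow_add hx0]
        ring_nf
    _ ≤ 12 * (N:ℝ) ^ (3 - 5 * a) := by
        have : (0:ℝ) ≤ (N:ℝ) ^ (3 - 5 * a) := by positivity
        linarith
end
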